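/- arXiv:2601.22385 — 4 statements merged into one kernel-verified Lean document; each statement's English description precedes it below -/
import Mathlib

section
/- If β₁, β₂, \bar{β} > 0 and w > 0 are constants such that β₁ σ(-β₁ x) = w \bar{β} σ(-\bar{β} x) holds for all real x, then β₁ = \bar{β} and w = 1. -/
noncomputable def sigma (z : ℝ) : ℝ := 1 / (1 + Real.exp (-z))

theorem sigma_eq_sigmoid : sigma = Real.sigmoid := by
  ext z
  rw [sigma, Real.sigmoid_def, one_div]

/-- Evaluating at `x = 0` gives `a = w * b`; at `x = 1` this turns the identity into
`σ(-a) = σ(-b)`, and `σ` is injective. -/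
theorem eq_and_eq_one_of_mul_sigmoid_neg_mul_eq {a b w : ℝ} (hb : b ≠ 0) (hw : w ≠ 0)
    (h : ∀ x : ℝ, a * Real.sigmoid (-(a * x)) = w * (b * Real.sigmoid (-(b * x)))) :
    a = b ∧ w = 1 := by
  have hab : a = w * b := by
    have h0 := h 0
    simp only [mul_zero, neg_zero, Real.sigmoid_zero] at h0
    linarith
  have ha : a ≠ 0 := hab ▸ mul_ne_zero hw hb
  have hσ : Real.sigmoid (-a) = Real.sigmoid (-b) := by
    have h1 := h 1
    rw [mul_one, mul_one, ← mul_assoc, ← hab] at h1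
    exact mul_left_cancel₀ ha h1
  have hab' : a = b := neg_injective (Real.sigmoid_injective hσ)
  refine ⟨hab', ?_⟩
  rw [hab'] at hab
  exact (mul_eq_right₀ hb).mp hab.symm

theorem stmt_3_general (β₁ βbar w : ℝ) (hβbar : 0 < βbar)
    (hw : 0 < w)
    (h : ∀ x : ℝ, β₁ * sigma (-(β₁ * x)) = w * (βbar * sigma (-(βbar * x)))) :
    β₁ = βbar ∧ w = 1 := by
  rw [sigma_eq_sigmoid] at h
  exact eq_and_eq_one_of_mul_sigmoid_neg_mul_eq hβbar.ne' hw.ne' h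

theorem stmt_3 (β₁ β₂ βbar w : ℝ) (hβ₁ : 0 < β₁) (hβ₂ : 0 < β₂) (hβbar : 0 < βbar)
    (hw : 0 < w)
    (h : ∀ x : ℝ, β₁ * sigma (-(β₁ * x)) = w * (βbar * sigma (-(βbar * x)))) :
    β₁ = βbar ∧ w = 1 :=
  stmt_3_general β₁ βbar w hβbar hw h
end

section
/- For distinct positive temperatures β ≠ \bar{β} and any fixed weight w, there exist two distinct nonzero real values x₁ ≠ x₂ such that w cannot simultaneously satisfy β σ(-β x₁) = w \bar{β} σ(-\bar{β} x₁) and β σ(-β x₂) = w \bar{β} σ(-\bar{β} x₂). -/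
/-!
Since `σ z = exp z * σ (-z)`, the ratio `c σ(a x) / (d σ(b x))` at `x` and at `-x` differ by the
factor `exp ((a - b) x)`. So if `w` balanced both equations at `x = ±1`, then `exp β = exp β̄`.
-/

open Real

lemma sigma_pos (z : ℝ) : 0 < sigma z := by
  unfold sigma
  positivity

lemma sigma_eq_exp_mul_sigma_neg (z : ℝ) : sigma z = exp z * sigma (-z) := by
  have h₁ : 0 < 1 + exp (-z) := by positivity
  have h₂ : 0 < 1 + exp z := by positivity
  unfold sigma
  rw [neg_neg]
  field_simp
  rw [add_mul, one_mul, ← exp_add, neg_add_cancel, exp_zero, add_comm]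

lemma eq_of_mul_sigma_eq_of_mul_sigma_neg_eq {a b c d x : ℝ} (hc : c ≠ 0) (hx : x ≠ 0)
    (h : c * sigma (a * x) = d * sigma (b * x))
    (hneg : c * sigma (-(a * x)) = d * sigma (-(b * x))) : a = b := by
  have hexp : exp (a * x) = exp (b * x) := by
    apply mul_right_cancel₀ (mul_ne_zero hc (sigma_pos (-(a * x))).ne')
    calc exp (a * x) * (c * sigma (-(a * x))) = c * sigma (a * x) := by
          rw [sigma_eq_exp_mul_sigma_neg (a * x)]; ring
      _ = d * sigma (b * x) := h
      _ = exp (b * x) * (d * sigma (-(b * x))) := by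
          rw [sigma_eq_exp_mul_sigma_neg (b * x)]; ring
      _ = exp (b * x) * (c * sigma (-(a * x))) := by rw [hneg]
  exact mul_right_cancel₀ hx (exp_injective hexp)

theorem stmt_4_general (β βbar : ℝ) (hβ : 0 < β) (hne : β ≠ βbar)
    (w : ℝ) :
    ∃ x₁ x₂ : ℝ, x₁ ≠ x₂ ∧ x₁ ≠ 0 ∧ x₂ ≠ 0 ∧
      ¬ (β * sigma (-(β * x₁)) = w * (βbar * sigma (-(βbar * x₁))) ∧
         β * sigma (-(β * x₂)) = w * (βbar * sigma (-(βbar * x₂)))) := by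
  refine ⟨-1, 1, by norm_num, by norm_num, by norm_num, ?_⟩
  rintro ⟨h₁, h₂⟩
  refine hne (eq_of_mul_sigma_eq_of_mul_sigma_neg_eq (d := w * βbar) hβ.ne' one_ne_zero ?_ ?_)
  · simpa only [mul_neg, mul_one, neg_neg, mul_assoc] using h₁
  · simpa only [mul_one, mul_assoc] using h₂

theorem stmt_4 (β βbar : ℝ) (hβ : 0 < β) (hβbar : 0 < βbar) (hne : β ≠ βbar)
    (w : ℝ) :
    ∃ x₁ x₂ : ℝ, x₁ ≠ x₂ ∧ x₁ ≠ 0 ∧ x₂ ≠ 0 ∧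
      ¬ (β * sigma (-(β * x₁)) = w * (βbar * sigma (-(βbar * x₁))) ∧
         β * sigma (-(β * x₂)) = w * (βbar * sigma (-(βbar * x₂)))) :=
  stmt_4_general β βbar hβ hne w
end

section
/- For 0 < β₁ < β₂ there exists x₀ > 0 such that β₂ σ(-β₂ x) > β₁ σ(-β₁ x) for all x ∈ (0, x₀), while β₂ σ(-β₂ x) < β₁ σ(-β₁ x) for all sufficiently large x. -/
open Filter Real Set Topology

lemma continuous_mul_sigma_neg_mul (β : ℝ) : Continuous fun x : ℝ => β * sigma (-(β * x)) := by
  unfold sigma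
  exact continuous_const.mul <| continuous_const.div (by fun_prop) fun x => by positivity

lemma sigma_zero : sigma 0 = 1 / 2 := by
  norm_num [sigma]

lemma sigma_neg_lt_exp_neg (z : ℝ) : sigma (-z) < exp (-z) := by
  rw [sigma, neg_neg, exp_neg, one_div]
  exact inv_strictAnti₀ (exp_pos z) (lt_one_add _)

lemma exp_neg_le_two_mul_sigma_neg {z : ℝ} (hz : 0 ≤ z) : exp (-z) ≤ 2 * sigma (-z) := by
  rw [sigma, neg_neg, exp_neg, mul_one_div, inv_eq_one_div,
    div_le_div_iff₀ (exp_pos z) (by positivity)]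
  linarith [one_le_exp hz]

lemma eventually_mul_sigma_lt_nhds_zero {β₁ β₂ : ℝ} (h : β₁ < β₂) :
    ∀ᶠ x in 𝓝 0, β₁ * sigma (-(β₁ * x)) < β₂ * sigma (-(β₂ * x)) := by
  refine (continuous_mul_sigma_neg_mul β₁).continuousAt.eventually_lt
    (continuous_mul_sigma_neg_mul β₂).continuousAt ?_
  simp only [mul_zero, neg_zero, sigma_zero]
  linarith

lemma eventually_mul_sigma_lt_atTop {β₁ β₂ : ℝ} (h1 : 0 < β₁) (h2 : β₁ < β₂) :
    ∀ᶠ x in atTop, β₂ * sigma (-(β₂ * x)) < β₁ * sigma (-(β₁ * x)) := by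
  have hgap : ∀ᶠ x in atTop, 2 * β₂ / β₁ < exp ((β₂ - β₁) * x) :=
    (tendsto_exp_atTop.comp (tendsto_id.const_mul_atTop (sub_pos.mpr h2))).eventually_gt_atTop _
  filter_upwards [hgap, eventually_ge_atTop 0] with x hx hx0
  have hβ₂ : 0 < β₂ := h1.trans h2
  have hexp : 2 * β₂ * exp (-(β₂ * x)) < β₁ * exp (-(β₁ * x)) := by
    rw [div_lt_iff₀ h1] at hx
    calc 2 * β₂ * exp (-(β₂ * x)) < exp ((β₂ - β₁) * x) * β₁ * exp (-(β₂ * x)) := by gcongr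
      _ = β₁ * exp ((β₂ - β₁) * x + -(β₂ * x)) := by rw [exp_add]; ring
      _ = β₁ * exp (-(β₁ * x)) := by ring_nf
  calc β₂ * sigma (-(β₂ * x)) < β₂ * exp (-(β₂ * x)) := by gcongr; exact sigma_neg_lt_exp_neg _
    _ < β₁ * exp (-(β₁ * x)) / 2 := by linarith
    _ ≤ β₁ * sigma (-(β₁ * x)) := by
      have := exp_neg_le_two_mul_sigma_neg (mul_nonneg h1.le hx0)
      nlinarith

theorem stmt_16 (β₁ β₂ : ℝ) (h1 : 0 < β₁) (h2 : β₁ < β₂) :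
    (∃ x₀ > (0 : ℝ), ∀ x ∈ Set.Ioo (0 : ℝ) x₀,
        β₁ * sigma (-(β₁ * x)) < β₂ * sigma (-(β₂ * x))) ∧
      ∃ M : ℝ, ∀ x ≥ M, β₂ * sigma (-(β₂ * x)) < β₁ * sigma (-(β₁ * x)) := by
  refine ⟨?_, eventually_atTop.mp (eventually_mul_sigma_lt_atTop h1 h2)⟩
  exact mem_nhdsGT_iff_exists_Ioo_subset.mp
    (nhdsWithin_le_nhds (eventually_mul_sigma_lt_nhds_zero h2))
end

section
/- If w : ℝ → ℝ is defined by w(x) = (β σ(-β x)) / (\bar{β} σ(-\bar{β} x)) with β ≠ \bar{β} both positive, then w is differentiable and its derivative is not identically zero; hence w is not constant. -/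
open Real

@[fun_prop]
lemma differentiable_sigma : Differentiable ℝ sigma := by
  unfold sigma
  exact (differentiable_const 1).div (by fun_prop) fun z => by positivity

lemma sigma_neg_div_sigma_neg (u v : ℝ) :
    sigma (-u) / sigma (-v) = (1 + exp v) / (1 + exp u) := by
  simp only [sigma, neg_neg]
  field_simp

section Weight

variable (β βbar : ℝ)

noncomputable def tempWeight (x : ℝ) : ℝ :=
  (β * sigma (-(β * x))) / (βbar * sigma (-(βbar * x)))

lemma differentiable_tempWeight (hβbar : βbar ≠ 0) : Differentiable ℝ (tempWeight β βbar) :=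
  fun x => by
    unfold tempWeight
    exact DifferentiableAt.div (by fun_prop) (by fun_prop) (mul_ne_zero hβbar (sigma_pos _).ne')

lemma tempWeight_eq (x : ℝ) :
    tempWeight β βbar x = β / βbar * ((1 + exp (βbar * x)) / (1 + exp (β * x))) := by
  rw [tempWeight, mul_div_mul_comm, sigma_neg_div_sigma_neg]

lemma tempWeight_zero_ne_one (hβ : β ≠ 0) (hβbar : βbar ≠ 0) (hne : β ≠ βbar) :
    tempWeight β βbar 0 ≠ tempWeight β βbar 1 := by
  rw [tempWeight_eq, tempWeight_eq]
  intro h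
  have hratio : (1 + exp βbar) / (1 + exp β) = 1 := by
    simpa [div_ne_zero hβ hβbar] using h.symm
  rw [div_eq_one_iff_eq (by positivity)] at hratio
  exact hne (exp_injective (add_left_cancel hratio)).symm

end Weight

theorem stmt_19 (β βbar : ℝ) (hβ : 0 < β) (hβbar : 0 < βbar) (hne : β ≠ βbar) :
    Differentiable ℝ (fun x : ℝ => (β * sigma (-(β * x))) / (βbar * sigma (-(βbar * x)))) ∧
      (∃ x : ℝ,
        deriv (fun x : ℝ => (β * sigma (-(β * x))) / (βbar * sigma (-(βbar * x)))) x ≠ 0) ∧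
      ¬ ∃ c : ℝ, ∀ x : ℝ,
        (β * sigma (-(β * x))) / (βbar * sigma (-(βbar * x))) = c := by
  have hdiff := differentiable_tempWeight β βbar hβbar.ne'
  have hvalues := tempWeight_zero_ne_one β βbar hβ.ne' hβbar.ne' hne
  refine ⟨hdiff, ?_, fun ⟨c, hc⟩ => hvalues ((hc 0).trans (hc 1).symm)⟩
  by_contra! hderiv
  exact hvalues (is_const_of_deriv_eq_zero hdiff hderiv 0 1)
end
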